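/- arXiv:1508.02170 — 6 statements merged into one kernel-verified Lean document; each statement's English description precedes it below -/
import Mathlib

section
/- Let n and k be natural numbers with 2 ≤ k ≤ n, and let α ∈ S_n be a permutation whose cycle type consists of exactly ⌊n/k⌋ cycles of length k (all remaining points fixed). Then 2·ind(α) ≥ n − 1, and equality 2·ind(α) = n − 1 holds if and only if n is odd and either k = 2 or 2k = n + 1. -/
/-!
Write `q = n / k` and `r = n % k`, so that `n = q k + r` and `ind(α) = q (k - 1)`.
Then `2 ind(α) - (n - 1) = q (k - 2) + 1 - r`, which is nonnegative because `r ≤ k - 1`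
and `q ≥ 1`. It vanishes iff `r = q (k - 2) + 1`; as `r < k`, this forces either `k = 2`
and `r = 1` (so `n` is odd), or `q = 1` and `r = k - 1`, i.e. `n = 2k - 1`.
-/

namespace Nat

theorem two_mul_div_mul_sub_one_add_mod {n k : ℕ} (hk : 2 ≤ k) :
    2 * (n / k * (k - 1)) + n % k = n + n / k * (k - 2) := by
  obtain ⟨j, rfl⟩ : ∃ j, k = j + 2 := ⟨k - 2, by omega⟩
  have hdiv := Nat.div_add_mod n (j + 2)
  simp only [Nat.add_sub_cancel, show j + 2 - 1 = j + 1 by omega] at hdiv ⊢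
  nlinarith

theorem mod_le_div_mul_sub_two_add_one {n k : ℕ} (hk : 2 ≤ k) (hkn : k ≤ n) :
    n % k ≤ n / k * (k - 2) + 1 :=
  calc n % k ≤ 1 * (k - 2) + 1 := by have := Nat.mod_lt n (by omega : 0 < k); omega
    _ ≤ n / k * (k - 2) + 1 := by
      gcongr
      exact (Nat.one_le_div_iff (by omega)).mpr hkn

theorem mod_eq_div_mul_sub_two_add_one_iff {n k : ℕ} (hk : 2 ≤ k) (hkn : k ≤ n) :
    n % k = n / k * (k - 2) + 1 ↔ Odd n ∧ (k = 2 ∨ 2 * k = n + 1) := by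
  have hdiv := Nat.div_add_mod n k
  have hmod := Nat.mod_lt n (by omega : 0 < k)
  have hq : 1 ≤ n / k := (Nat.one_le_div_iff (by omega)).mpr hkn
  rw [Nat.odd_iff]
  constructor
  · intro h
    rcases eq_or_lt_of_le hk with rfl | hk3
    · simpa using h
    · have hq1 : n / k = 1 := by
        by_contra hne
        have : 2 * (k - 2) ≤ n / k * (k - 2) := Nat.mul_le_mul_right _ (by omega)
        omega
      rw [hq1] at hdiv h
      omega
  · rintro ⟨hodd, rfl | hnk⟩
    · simpa using hodd
    · have hq1 : n / k = 1 := Nat.div_eq_of_lt_le (by omega) (by omega)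
      rw [hq1] at hdiv ⊢
      omega

end Nat

theorem Equiv.Perm.cycleType_sum_sub_card_of_eq_replicate {α : Type*} [Fintype α]
    [DecidableEq α] {σ : Equiv.Perm α} {q k : ℕ} (h : σ.cycleType = Multiset.replicate q k) :
    σ.cycleType.sum - σ.cycleType.card = q * (k - 1) := by
  rw [h, Multiset.sum_replicate, Multiset.card_replicate, smul_eq_mul, Nat.mul_sub_one,
    mul_comm]

/-- Lemma on the index of a permutation consisting of `⌊n/k⌋` disjoint
`k`-cycles: `2 · ind(α) ≥ n - 1`, with equality iff `n` is odd and `k = 2` or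
`2k = n + 1`.  Here `ind(α)` is the sum of the cycle type of `α` minus the
number of its entries. -/
theorem index_lower_bound (n k : ℕ) (hk : 2 ≤ k) (hkn : k ≤ n)
    (α : Equiv.Perm (Fin n))
    (hα : α.cycleType = Multiset.replicate (n / k) k) :
    n - 1 ≤ 2 * (α.cycleType.sum - α.cycleType.card) ∧
    (2 * (α.cycleType.sum - α.cycleType.card) = n - 1 ↔
      Odd n ∧ (k = 2 ∨ 2 * k = n + 1)) := by
  rw [Equiv.Perm.cycleType_sum_sub_card_of_eq_replicate hα,
    ← Nat.mod_eq_div_mul_sub_two_add_one_iff hk hkn]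
  have hsum := Nat.two_mul_div_mul_sub_one_add_mod (n := n) hk
  have hmod := Nat.mod_le_div_mul_sub_two_add_one hk hkn
  generalize n / k * (k - 1) = ind at hsum
  generalize n / k * (k - 2) = m at hsum hmod ⊢
  omega
end

section
/- Let n and k be natural numbers with n even and 2 ≤ k ≤ n, and let α ∈ S_n be a permutation whose cycle type consists of exactly ⌊n/k⌋ cycles of length k (all remaining points fixed). Then 2·ind(α) ≥ n, and equality 2·ind(α) = n holds if and only if k = 2, or 2k = n + 2, or (n, k) = (8, 3). -/
/-! With `q = n / k` and `r = n % k`, the index of `α` is `q (k - 1)`, and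
`2 q (k - 1) = n + (q (k - 2) - r)`. So everything reduces to `r ≤ q (k - 2)`, with
equality only in the listed cases: parity forces `r = 0` when `k = 2` and excludes
`r = k - 1` when `q = 1`, and for `q ≥ 2` the bound `2 (k - 2) ≥ k - 1 > r` is strict unless `k = 3`. -/

theorem Multiset.sum_sub_card_replicate (q k : ℕ) :
    (Multiset.replicate q k).sum - (Multiset.replicate q k).card = q * (k - 1) := by
  rw [Multiset.sum_replicate, Multiset.card_replicate, smul_eq_mul, Nat.mul_sub_one]

namespace Nat

theorem two_mul_div_mul_pred_add_mod (n : ℕ) {k : ℕ} (hk : 2 ≤ k) :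
    2 * (n / k * (k - 1)) + n % k = n + n / k * (k - 2) := by
  obtain ⟨j, rfl⟩ := Nat.exists_eq_add_of_le' hk
  have hdiv := Nat.div_add_mod' n (j + 2)
  simp only [Nat.add_sub_cancel, show j + 2 - 1 = j + 1 by omega] at hdiv ⊢
  nlinarith

theorem mod_le_div_mul_sub_two {n k : ℕ} (hn : Even n) (hk : 2 ≤ k) (hkn : k ≤ n) :
    n % k ≤ n / k * (k - 2) := by
  have hdiv := Nat.div_add_mod' n k
  have hr := Nat.mod_lt n (by omega : 0 < k)
  have hq : 1 ≤ n / k := (Nat.one_le_div_iff (by omega)).mpr hkn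
  obtain ⟨m, hm⟩ := hn
  rcases (by omega : n / k = 1 ∨ 2 ≤ n / k) with hq1 | hq2
  · rw [hq1] at hdiv ⊢
    omega
  · rcases (by omega : k = 2 ∨ 3 ≤ k) with rfl | hk3
    · omega
    · calc n % k ≤ 2 * (k - 2) := by omega
        _ ≤ n / k * (k - 2) := Nat.mul_le_mul_right _ hq2

theorem div_mul_sub_two_eq_mod_iff {n k : ℕ} (hn : Even n) (hk : 2 ≤ k) (hkn : k ≤ n) :
    n / k * (k - 2) = n % k ↔ k = 2 ∨ 2 * k = n + 2 ∨ (n = 8 ∧ k = 3) := by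
  have hdiv := Nat.div_add_mod' n k
  have hr := Nat.mod_lt n (by omega : 0 < k)
  have hq : 1 ≤ n / k := (Nat.one_le_div_iff (by omega)).mpr hkn
  constructor
  · intro heq
    rcases (by omega : n / k = 1 ∨ 2 ≤ n / k) with hq1 | hq2
    · rw [hq1] at hdiv heq
      omega
    · have h2 : 2 * (k - 2) ≤ n / k * (k - 2) := Nat.mul_le_mul_right _ hq2
      rcases (by omega : k = 2 ∨ k = 3) with rfl | rfl
      · exact Or.inl rfl
      · omega
  · rintro (rfl | hnk | ⟨rfl, rfl⟩)
    · simpa using (Nat.even_iff.mp hn).symm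
    · have hq1 : n / k = 1 := by
        rw [Nat.div_eq_iff (by omega)]
        omega
      rw [hq1] at hdiv ⊢
      omega
    · rfl

end Nat

/-- Lemma on the index of a permutation consisting of `⌊n/k⌋` disjoint
`k`-cycles, for even `n`: `2 · ind(α) ≥ n`, with equality iff `k = 2`, or
`2k = n + 2`, or `(n, k) = (8, 3)`.  Here `ind(α)` is the sum of the cycle
type of `α` minus the number of its entries. -/
theorem index_lower_bound_even (n k : ℕ) (hn : Even n) (hk : 2 ≤ k) (hkn : k ≤ n)
    (α : Equiv.Perm (Fin n))
    (hα : α.cycleType = Multiset.replicate (n / k) k) :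
    n ≤ 2 * (α.cycleType.sum - α.cycleType.card) ∧
    (2 * (α.cycleType.sum - α.cycleType.card) = n ↔
      k = 2 ∨ 2 * k = n + 2 ∨ (n = 8 ∧ k = 3)) := by
  rw [hα, Multiset.sum_sub_card_replicate, ← Nat.div_mul_sub_two_eq_mod_iff hn hk hkn]
  have hindex := Nat.two_mul_div_mul_pred_add_mod n hk
  have hle := Nat.mod_le_div_mul_sub_two hn hk hkn
  constructor <;> omega
end

section
/- For every even integer c ≥ 6 there exist permutations x, y in the symmetric group S_{c+2} such that both x and y are c-cycles (cycle type {c}) and the product x·y has cycle type {c, 2}. -/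
/-!
Take `x = (0 1 ⋯ c-1)`. For a `c`-cycle `y` agreeing with `x` away from the last few points,
`x y` acts as `v ↦ v + 2` on most points, like `x²`, which splits into the cycle of the even and
the cycle of the odd points below `c`. The `y` chosen here reroutes the ends of these two cycles
through the extra points `c, c+1`, splicing them into one `c`-cycle, and leaves `c-3, c-2` as a
transposition. The cycle types are read off from explicit conjugators: `y = σ x σ⁻¹`, and
`x y (c-3 c-2) = τ x τ⁻¹`, where `τ` sends the fixed points `c, c+1` of `x` to `c-3, c-2`.
Each of these identities is a finite case distinction in linear arithmetic on indices.
-/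

open Equiv Equiv.Perm

noncomputable def finPermOfInjOn {n : ℕ} (f : ℕ → ℕ)
    (hmaps : Set.MapsTo f (Set.Iio n) (Set.Iio n)) (hinj : Set.InjOn f (Set.Iio n)) :
    Perm (Fin n) :=
  Equiv.ofBijective (fun v => ⟨f v, hmaps v.isLt⟩) <| Finite.injective_iff_bijective.mp
    fun v w h => Fin.ext (hinj v.isLt w.isLt (congrArg Fin.val h))

@[simp]
theorem val_finPermOfInjOn {n : ℕ} (f : ℕ → ℕ) (hmaps : Set.MapsTo f (Set.Iio n) (Set.Iio n))
    (hinj : Set.InjOn f (Set.Iio n)) (v : Fin n) : (finPermOfInjOn f hmaps hinj v : ℕ) = f v :=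
  rfl

theorem Fin.val_swap {n : ℕ} (a b v : Fin n) : (swap a b v : ℕ) = swap (a : ℕ) b v :=
  (Fin.val_injective.swap_apply a b v).symm

namespace Equiv.Perm

variable {α : Type*} [Fintype α] [DecidableEq α]

theorem cycleType_eq_of_semiconjBy {σ x y : Perm α} (h : SemiconjBy σ x y) :
    y.cycleType = x.cycleType :=
  (isConj_iff_cycleType_eq.mp ⟨toUnits σ, h⟩).symm

theorem cycleType_mul_swap_of_apply_eq {z : Perm α} {a b : α} (hab : a ≠ b) (ha : z a = a)
    (hb : z b = b) : (z * swap a b).cycleType = z.cycleType + {2} := by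
  have hdisj : Disjoint z (swap a b) := fun v => by
    by_cases hva : v = a
    · exact Or.inl (hva ▸ ha)
    by_cases hvb : v = b
    · exact Or.inl (hvb ▸ hb)
    exact Or.inr (swap_apply_of_ne_of_ne hva hvb)
  rw [hdisj.cycleType_mul, (isCycle_swap hab).cycleType, card_support_swap hab]

theorem cycleType_mul_swap_of_semiconjBy {τ x z : Perm α} (h : SemiconjBy τ x z) {a b : α}
    (hab : a ≠ b) (ha : x a = a) (hb : x b = b) :
    (z * swap (τ a) (τ b)).cycleType = x.cycleType + {2} := by
  have hfix {v : α} (hv : x v = v) : z (τ v) = τ v := by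
    rw [← Perm.mul_apply, ← h.eq, Perm.mul_apply, hv]
  rw [cycleType_mul_swap_of_apply_eq (τ.injective.ne hab) (hfix ha) (hfix hb),
    cycleType_eq_of_semiconjBy h]

end Equiv.Perm

/- On `{0, …, c+1}` (the paper's points `1, …, c+2`, shifted down by one):
`shiftCycle c` is `x = (0 1 ⋯ c-1)`, `twistedCycle c` is `y = (0 1 ⋯ c-5, c-2, c-4, c, c+1)`,
`twist c` is `σ`, fixing `i < c-4` and sending `c-4, c-3, c-2, c-1, c, c+1` to
`c-2, c-4, c, c+1, c-3, c-1`, and `interleave c` is `τ`, enumerating the `c`-cycle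
`(0 2 ⋯ c-4, c, c+1, 1 3 ⋯ c-5, c-1)` of `x y` and then sending `c, c+1` to `c-3, c-2`. -/

def shiftCycle (c v : ℕ) : ℕ :=
  if v + 1 < c then v + 1 else if v + 1 = c then 0 else v

def twistedCycle (c v : ℕ) : ℕ :=
  if v + 5 < c then v + 1 else if v + 5 = c then c - 2 else if v + 2 = c then c - 4
  else if v + 4 = c then c else if v = c then c + 1 else if v = c + 1 then 0 else v

def twist (c v : ℕ) : ℕ :=
  if v + 4 < c then v else if v + 4 = c then c - 2 else if v + 3 = c then c - 4
  else if v + 2 = c then c else if v + 1 = c then c + 1 else if v = c then c - 3 else c - 1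

def interleave (c v : ℕ) : ℕ :=
  if 2 * v + 4 ≤ c then 2 * v else if 2 * v + 2 = c then c else if 2 * v = c then c + 1
  else if v + 1 < c then 2 * v - c - 1 else if v + 1 = c then c - 1 else if v = c then c - 3
  else c - 2

theorem val_cycleRange_eq_shiftCycle {c : ℕ} (hc : 1 ≤ c) (v : Fin (c + 2)) :
    (Fin.cycleRange (⟨c - 1, by omega⟩ : Fin (c + 2)) v : ℕ) = shiftCycle c v := by
  rcases le_or_gt v ⟨c - 1, by omega⟩ with hv | hv
  · rw [Fin.coe_cycleRange_of_le hv, shiftCycle]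
    rw [Fin.le_def] at hv
    split_ifs <;> simp_all [Fin.ext_iff] <;> omega
  · rw [Fin.cycleRange_of_gt hv, shiftCycle]
    rw [Fin.lt_def] at hv
    split_ifs <;> simp_all <;> omega

theorem twistedCycle_mapsTo (c : ℕ) :
    Set.MapsTo (twistedCycle c) (Set.Iio (c + 2)) (Set.Iio (c + 2)) :=
  fun _ _ => by grind [twistedCycle]

theorem twistedCycle_injOn {c : ℕ} (hc : 5 ≤ c) : Set.InjOn (twistedCycle c) (Set.Iio (c + 2)) :=
  fun _ _ _ _ _ => by grind (splits := 40) [twistedCycle]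

theorem twist_mapsTo (c : ℕ) : Set.MapsTo (twist c) (Set.Iio (c + 2)) (Set.Iio (c + 2)) :=
  fun _ _ => by grind [twist]

theorem twist_injOn {c : ℕ} (hc : 4 ≤ c) : Set.InjOn (twist c) (Set.Iio (c + 2)) :=
  fun _ _ _ _ _ => by grind (splits := 40) [twist]

theorem interleave_mapsTo (c : ℕ) :
    Set.MapsTo (interleave c) (Set.Iio (c + 2)) (Set.Iio (c + 2)) :=
  fun _ _ => by grind [interleave]

theorem interleave_injOn {c : ℕ} (hc : Even c) (hc4 : 4 ≤ c) :
    Set.InjOn (interleave c) (Set.Iio (c + 2)) :=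
  fun _ _ _ _ _ => by grind (splits := 40) [interleave]

theorem twist_shiftCycle {c : ℕ} (hc : 5 ≤ c) (v : ℕ) :
    twist c (shiftCycle c v) = twistedCycle c (twist c v) := by
  grind (splits := 40) [twistedCycle, twist, shiftCycle]

theorem interleave_shiftCycle {c : ℕ} (hc : Even c) (hc6 : 6 ≤ c) (v : ℕ) :
    interleave c (shiftCycle c v) = shiftCycle c
      (twistedCycle c (swap (interleave c c) (interleave c (c + 1)) (interleave c v))) := by
  grind (splits := 40) [shiftCycle, twistedCycle, interleave]

/-- For every even `c ≥ 6` there exist two `c`-cycles `x, y ∈ S_{c+2}` whose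
product has cycle type `{c, 2}`. -/
theorem two_c_cycles (c : ℕ) (hc : Even c) (hc6 : 6 ≤ c) :
    ∃ x y : Equiv.Perm (Fin (c + 2)),
      x.cycleType = ({c} : Multiset ℕ) ∧ y.cycleType = ({c} : Multiset ℕ) ∧
      (x * y).cycleType = ({c, 2} : Multiset ℕ) := by
  set x := Fin.cycleRange (⟨c - 1, by omega⟩ : Fin (c + 2))
  set y := finPermOfInjOn (twistedCycle c) (twistedCycle_mapsTo c) (twistedCycle_injOn (by omega))
  set σ := finPermOfInjOn (twist c) (twist_mapsTo c) (twist_injOn (by omega))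
  set τ := finPermOfInjOn (interleave c) (interleave_mapsTo c) (interleave_injOn hc (by omega))
  set t := swap (τ ⟨c, by omega⟩) (τ ⟨c + 1, by omega⟩)
  have hx : x.cycleType = {c} := by
    rw [Fin.cycleType_cycleRange (Fin.ne_of_val_ne (by simp; omega))]
    simp only [Nat.sub_add_cancel (by omega : 1 ≤ c)]
  have hσ : SemiconjBy σ x y := Perm.ext fun v => Fin.ext <| by
    simp [x, σ, y, val_cycleRange_eq_shiftCycle (by omega : 1 ≤ c),
      twist_shiftCycle (c := c) (by omega)]
  have hτ : SemiconjBy τ x (x * y * t) := Perm.ext fun v => Fin.ext <| by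
    simp [x, τ, y, t, val_cycleRange_eq_shiftCycle (by omega : 1 ≤ c), Fin.val_swap,
      interleave_shiftCycle hc hc6]
  have hfix {v : Fin (c + 2)} (hv : c ≤ v) : x v = v := Fin.cycleRange_of_gt (Fin.lt_def.mpr (by simp; omega))
  refine ⟨x, y, hx, (cycleType_eq_of_semiconjBy hσ).trans hx, ?_⟩
  rw [show x * y = x * y * t * t by simp [t, mul_assoc],
    cycleType_mul_swap_of_semiconjBy hτ (by simp) (hfix le_rfl) (hfix (Nat.le_succ c)), hx]
  rfl
end

section
/- For every odd integer a ≥ 3 there exist permutations x, y in the symmetric group S_{2a} such that x has cycle type {a, a} (the disjoint product of two a-cycles), y is an a-cycle (cycle type {a}), and the product x·y has cycle type {2a−2, 2}. -/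
/-!
Write `a = 2k + 1` and label the points `0, …, 4k + 1`. Take `x = (0 1 … 2k)(2k+1 … 4k+1)` and
`y = (0 1 … 2k-2 4k+1 4k-1)`. Following every point through `y` and then `x` (Mathlib's
`(x * y) p = x (y p)`) shows
`x * y = (0 2 … 2k-2 2k+1 2k+2 … 4k-1 1 3 … 2k-1 2k)(4k 4k+1)`:
on `0, …, 2k - 2` both `x` and `y` step by one, so the product steps by two, and the detours
through `4k + 1` and `4k - 1` link the even run, the run `2k+1, …, 4k-1` and the odd run into one
cycle of length `4k = 2a - 2`, leaving the transposition `(4k 4k+1)`.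

The identity is checked pointwise: each cycle acts by an explicit piecewise successor map on
indices, which turns it into linear arithmetic.
-/

open Equiv Equiv.Perm

theorem Set.mapsTo_const_add_Iio {b n N : ℕ} (hbn : b + n ≤ N) :
    Set.MapsTo (b + ·) (Set.Iio n) (Set.Iio N) :=
  fun i hi => by simp only [Set.mem_Iio] at hi ⊢; omega

namespace List

variable {α : Type*} {g g' : ℕ → α} {n n' : ℕ}

theorem nodup_map_range (hg : Set.InjOn g (Set.Iio n)) : ((range n).map g).Nodup :=
  nodup_range.map_on fun _ hi _ hj hij => hg (mem_range.1 hi) (mem_range.1 hj) hij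

variable [DecidableEq α]

theorem formPerm_map_range_apply_add_one (hg : Set.InjOn g (Set.Iio n)) {i : ℕ}
    (hi : i + 1 < n) : ((range n).map g).formPerm (g i) = g (i + 1) := by
  have := formPerm_apply_getElem _ (nodup_map_range hg) i
    (by simp only [length_map, length_range]; omega)
  simpa only [getElem_map, getElem_range, length_map, length_range, Nat.mod_eq_of_lt hi] using this

theorem formPerm_map_range_apply_sub_one (hg : Set.InjOn g (Set.Iio n)) (hn : 0 < n) :
    ((range n).map g).formPerm (g (n - 1)) = g 0 := by
  have := formPerm_apply_getElem _ (nodup_map_range hg) (n - 1)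
    (by simp only [length_map, length_range]; omega)
  simpa only [getElem_map, getElem_range, length_map, length_range, Nat.sub_add_cancel hn,
    Nat.mod_self] using this

theorem formPerm_map_range_apply_of_forall_ne {x : α} (hx : ∀ i < n, g i ≠ x) :
    ((range n).map g).formPerm x = x :=
  formPerm_apply_of_notMem (by simpa using hx)

theorem cycleType_formPerm_map_range [Fintype α] (hg : Set.InjOn g (Set.Iio n)) (hn : 2 ≤ n) :
    ((range n).map g).formPerm.cycleType = {n} := by
  have hnd := nodup_map_range hg
  rw [(isCycle_formPerm hnd (by simpa using hn)).cycleType,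
    support_formPerm_of_nodup _ hnd fun x hx => by have := congrArg length hx; simp at this; omega,
    toFinset_card_of_nodup hnd, length_map, length_range]

theorem disjoint_formPerm_map_range (h : ∀ i < n, ∀ j < n', g i ≠ g' j) :
    Perm.Disjoint ((range n).map g).formPerm ((range n').map g').formPerm := by
  intro x
  by_cases hx : ∃ i < n, g i = x
  · obtain ⟨i, hi, rfl⟩ := hx
    exact .inr (formPerm_map_range_apply_of_forall_ne fun j hj => (h i hi j hj).symm)
  · push Not at hx
    exact .inl (formPerm_map_range_apply_of_forall_ne hx)

end List

section natCycle

open Fin.NatCast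

def natCycle (N : ℕ) [NeZero N] (f : ℕ → ℕ) (n : ℕ) : Perm (Fin N) :=
  ((List.range n).map fun i => (f i : Fin N)).formPerm

def blockNext (b n m : ℕ) : ℕ :=
  if m + 1 = b + n then b else if b ≤ m ∧ m < b + n then m + 1 else m

variable {N : ℕ} [NeZero N] {f f' σ : ℕ → ℕ} {n n' : ℕ}

theorem natCycle_natCast (hf : Set.MapsTo f (Set.Iio n) (Set.Iio N))
    (hinj : Set.InjOn f (Set.Iio n)) (hstep : ∀ i, i + 1 < n → σ (f i) = f (i + 1))
    (hlast : σ (f (n - 1)) = f 0) (hfix : ∀ m < N, σ m ≠ m → ∃ i < n, f i = m)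
    {m : ℕ} (hm : m < N) : natCycle N f n m = σ m := by
  have hg := (CharP.natCast_injOn_Iio (Fin N) N).comp hinj hf
  by_cases hmem : ∃ i < n, f i = m
  · obtain ⟨i, hi, rfl⟩ := hmem
    by_cases hi' : i + 1 < n
    · rw [hstep i hi']
      exact List.formPerm_map_range_apply_add_one hg hi'
    · obtain rfl : i = n - 1 := by omega
      rw [hlast]
      exact List.formPerm_map_range_apply_sub_one hg (by omega)
  · push Not at hmem
    have hσ : σ m = m := by_contra fun hne => by
      obtain ⟨i, hi, hfi⟩ := hfix m hm hne
      exact hmem i hi hfi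
    rw [hσ]
    exact List.formPerm_map_range_apply_of_forall_ne fun i hi hfi =>
      hmem i hi (CharP.natCast_injOn_Iio (Fin N) N (hf hi) hm hfi)

theorem natCycle_add_natCast {b m : ℕ} (hn : 0 < n) (hbn : b + n ≤ N) (hm : m < N) :
    natCycle N (b + ·) n m = blockNext b n m :=
  natCycle_natCast (Set.mapsTo_const_add_Iio hbn) (add_right_injective b).injOn
    (fun i hi => by simp only [blockNext]; split_ifs <;> omega)
    (by simp only [blockNext]; split_ifs <;> omega)
    (fun m _ hne => by
      simp only [blockNext] at hne
      exact ⟨m - b, by split_ifs at hne <;> omega, by split_ifs at hne <;> omega⟩) hm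

theorem cycleType_natCycle (hf : Set.MapsTo f (Set.Iio n) (Set.Iio N))
    (hinj : Set.InjOn f (Set.Iio n)) (hn : 2 ≤ n) : (natCycle N f n).cycleType = {n} :=
  List.cycleType_formPerm_map_range ((CharP.natCast_injOn_Iio (Fin N) N).comp hinj hf) hn

theorem disjoint_natCycle (hf : Set.MapsTo f (Set.Iio n) (Set.Iio N))
    (hf' : Set.MapsTo f' (Set.Iio n') (Set.Iio N)) (h : ∀ i < n, ∀ j < n', f i ≠ f' j) :
    (natCycle N f n).Disjoint (natCycle N f' n') :=
  List.disjoint_formPerm_map_range fun i hi j hj hij =>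
    h i hi j hj (CharP.natCast_injOn_Iio (Fin N) N (hf hi) (hf' hj) hij)

theorem cycleType_natCycle_add {b : ℕ} (hn : 2 ≤ n) (hbn : b + n ≤ N) :
    (natCycle N (b + ·) n).cycleType = {n} :=
  cycleType_natCycle (Set.mapsTo_const_add_Iio hbn) (add_right_injective b).injOn hn

end natCycle

namespace ExceptionalAA

open Fin.NatCast

variable {k : ℕ}

def xPerm (k : ℕ) : Perm (Fin (2 * (2 * k + 1))) :=
  natCycle _ (0 + ·) (2 * k + 1) * natCycle _ (2 * k + 1 + ·) (2 * k + 1)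

def xNext (k m : ℕ) : ℕ :=
  if m = 2 * k then 0 else if m = 4 * k + 1 then 2 * k + 1 else m + 1

theorem xPerm_cycleType (hk : 1 ≤ k) : (xPerm k).cycleType = {2 * k + 1, 2 * k + 1} := by
  have hd : (natCycle (2 * (2 * k + 1)) (0 + ·) (2 * k + 1)).Disjoint
      (natCycle _ (2 * k + 1 + ·) (2 * k + 1)) :=
    disjoint_natCycle (Set.mapsTo_const_add_Iio (by omega)) (Set.mapsTo_const_add_Iio (by omega))
      fun i hi j _ => by omega
  rw [xPerm, hd.cycleType_mul, cycleType_natCycle_add, cycleType_natCycle_add]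
  all_goals first | rfl | omega

theorem xPerm_natCast {m : ℕ} (hm : m < 2 * (2 * k + 1)) : xPerm k m = xNext k m := by
  rw [xPerm, mul_apply, natCycle_add_natCast (by omega) (by omega) hm,
    natCycle_add_natCast (by omega) (by omega) (by simp only [blockNext]; split_ifs <;> omega)]
  congr 1
  simp only [xNext, blockNext]
  split_ifs <;> omega

def yIndex (k i : ℕ) : ℕ :=
  if i < 2 * k - 1 then i else if i = 2 * k - 1 then 4 * k + 1 else 4 * k - 1

def yPerm (k : ℕ) : Perm (Fin (2 * (2 * k + 1))) :=
  natCycle _ (yIndex k) (2 * k + 1)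

def yNext (k m : ℕ) : ℕ :=
  if m < 2 * k - 2 then m + 1 else if m = 2 * k - 2 then 4 * k + 1
  else if m = 4 * k + 1 then 4 * k - 1 else if m = 4 * k - 1 then 0 else m

theorem yIndex_mapsTo : Set.MapsTo (yIndex k) (Set.Iio (2 * k + 1)) (Set.Iio (2 * (2 * k + 1))) :=
  fun i _ => by simp only [Set.mem_Iio, yIndex]; split_ifs <;> omega

theorem yIndex_injOn (hk : 1 ≤ k) : Set.InjOn (yIndex k) (Set.Iio (2 * k + 1)) :=
  fun i hi j hj hij => by
    simp only [Set.mem_Iio, yIndex] at hi hj hij; split_ifs at hij <;> omega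

theorem yPerm_cycleType (hk : 1 ≤ k) : (yPerm k).cycleType = {2 * k + 1} :=
  cycleType_natCycle yIndex_mapsTo (yIndex_injOn hk) (by omega)

theorem yPerm_natCast (hk : 1 ≤ k) {m : ℕ} (hm : m < 2 * (2 * k + 1)) :
    yPerm k m = yNext k m :=
  natCycle_natCast yIndex_mapsTo (yIndex_injOn hk)
    (fun i hi => by simp only [yIndex, yNext]; split_ifs <;> omega)
    (by simp only [yIndex, yNext]; split_ifs <;> omega)
    (fun m _ hne => by
      have : m ≤ 2 * k - 2 ∨ m = 4 * k + 1 ∨ m = 4 * k - 1 := by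
        simp only [yNext] at hne; split_ifs at hne <;> omega
      rcases this with hm' | hm' | hm'
      · exact ⟨m, by omega, by simp only [yIndex]; split_ifs <;> omega⟩
      · exact ⟨2 * k - 1, by omega, by simp only [yIndex]; split_ifs <;> omega⟩
      · exact ⟨2 * k, by omega, by simp only [yIndex]; split_ifs <;> omega⟩) hm

-- enumerates `0, 2, …, 2k-2, 2k+1, 2k+2, …, 4k-1, 1, 3, …, 2k-1, 2k`
def zIndex (k j : ℕ) : ℕ :=
  if j < k then 2 * j else if j < 3 * k - 1 then j + k + 1
  else if j < 4 * k - 1 then 2 * (j - (3 * k - 1)) + 1 else 2 * k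

def zPerm (k : ℕ) : Perm (Fin (2 * (2 * k + 1))) :=
  natCycle _ (zIndex k) (4 * k) * natCycle _ (4 * k + ·) 2

def zNext (k m : ℕ) : ℕ :=
  if m < 2 * k - 2 then m + 2 else if m = 2 * k - 2 then 2 * k + 1
  else if m = 2 * k - 1 then 2 * k else if m = 2 * k then 0
  else if m < 4 * k - 1 then m + 1 else if m = 4 * k - 1 then 1 else m

theorem zIndex_mapsTo : Set.MapsTo (zIndex k) (Set.Iio (4 * k)) (Set.Iio (4 * k)) :=
  fun i hi => by simp only [Set.mem_Iio, zIndex] at hi ⊢; split_ifs <;> omega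

theorem zIndex_injOn : Set.InjOn (zIndex k) (Set.Iio (4 * k)) :=
  fun i hi j hj hij => by
    simp only [Set.mem_Iio, zIndex] at hi hj hij; split_ifs at hij <;> omega

theorem zPerm_cycleType (hk : 1 ≤ k) : (zPerm k).cycleType = {4 * k, 2} := by
  have hz : Set.MapsTo (zIndex k) (Set.Iio (4 * k)) (Set.Iio (2 * (2 * k + 1))) :=
    zIndex_mapsTo.mono_right fun _ => by simp only [Set.mem_Iio]; omega
  have hd : (natCycle _ (zIndex k) (4 * k)).Disjoint (natCycle _ (4 * k + ·) 2) :=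
    disjoint_natCycle hz (Set.mapsTo_const_add_Iio (by omega)) fun i hi j _ => by
      have := zIndex_mapsTo hi
      simp only [Set.mem_Iio] at this
      omega
  rw [zPerm, hd.cycleType_mul, cycleType_natCycle hz zIndex_injOn (by omega),
    cycleType_natCycle_add le_rfl (by omega)]
  rfl

theorem natCycle_zIndex_natCast (hk : 1 ≤ k) {m : ℕ} (hm : m < 2 * (2 * k + 1)) :
    natCycle (2 * (2 * k + 1)) (zIndex k) (4 * k) m = zNext k m :=
  natCycle_natCast (zIndex_mapsTo.mono_right fun _ => by simp only [Set.mem_Iio]; omega)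
    zIndex_injOn (fun j hj => by
      generalize hp : zIndex k j = p
      generalize hq : zIndex k (j + 1) = q
      simp only [zIndex, zNext] at hp hq ⊢
      split_ifs at hp hq ⊢ <;> omega)
    (by simp only [zIndex, zNext]; split_ifs <;> omega)
    (fun m _ hne => by
      have hm4 : m < 4 * k := by simp only [zNext] at hne; split_ifs at hne <;> omega
      rcases (by omega : (m % 2 = 0 ∧ m < 2 * k) ∨ (m % 2 = 1 ∧ m < 2 * k) ∨ m = 2 * k ∨
        2 * k < m) with hm' | hm' | hm' | hm'
      · exact ⟨m / 2, by omega, by simp only [zIndex]; split_ifs <;> omega⟩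
      · exact ⟨3 * k - 1 + m / 2, by omega, by simp only [zIndex]; split_ifs <;> omega⟩
      · exact ⟨4 * k - 1, by omega, by simp only [zIndex]; split_ifs <;> omega⟩
      · exact ⟨m - k - 1, by omega, by simp only [zIndex]; split_ifs <;> omega⟩) hm

theorem xNext_yNext (hk : 1 ≤ k) {m : ℕ} (hm : m < 2 * (2 * k + 1)) :
    xNext k (yNext k m) = zNext k (blockNext (4 * k) 2 m) := by
  rw [blockNext]
  rcases (by omega : m < 4 * k ∨ m = 4 * k ∨ m = 4 * k + 1) with hm' | hm' | hm' <;>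
    [rw [if_neg (by omega), if_neg (by omega)]; rw [if_neg (by omega), if_pos (by omega)];
      rw [if_pos (by omega)]] <;>
  · -- naming `yNext k m` keeps `split_ifs` off the conditions nested inside `xNext`
    generalize hy : yNext k m = m'
    simp only [xNext, yNext, zNext] at hy ⊢
    split_ifs at hy ⊢ <;> omega

theorem xPerm_mul_yPerm (hk : 1 ≤ k) : xPerm k * yPerm k = zPerm k := by
  refine Equiv.ext fun p => ?_
  obtain ⟨m, hm, rfl⟩ : ∃ m < 2 * (2 * k + 1), (m : Fin _) = p :=
    ⟨p, p.isLt, Fin.cast_val_eq_self p⟩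
  rw [mul_apply, zPerm, mul_apply, yPerm_natCast hk hm,
    xPerm_natCast (by simp only [yNext]; split_ifs <;> omega),
    natCycle_add_natCast (by omega) (by omega) hm,
    natCycle_zIndex_natCast hk (by simp only [blockNext]; split_ifs <;> omega),
    xNext_yNext hk hm]

end ExceptionalAA

open ExceptionalAA in
/-- For every odd `a ≥ 3` there exist `x, y ∈ S_{2a}` with `x` of cycle type
`{a, a}`, `y` an `a`-cycle, and `x * y` of cycle type `{2a - 2, 2}`. -/
theorem exceptional_a_a (a : ℕ) (ha : Odd a) (ha3 : 3 ≤ a) :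
    ∃ x y : Equiv.Perm (Fin (2 * a)),
      x.cycleType = ({a, a} : Multiset ℕ) ∧ y.cycleType = ({a} : Multiset ℕ) ∧
      (x * y).cycleType = ({2 * a - 2, 2} : Multiset ℕ) := by
  obtain ⟨k, rfl⟩ := ha
  have hk : 1 ≤ k := by omega
  refine ⟨xPerm k, yPerm k, xPerm_cycleType hk, yPerm_cycleType hk, ?_⟩
  rw [xPerm_mul_yPerm hk, zPerm_cycleType hk, show 2 * (2 * k + 1) - 2 = 4 * k by omega]
end

section
/- There exist permutations x, y in the symmetric group S_{10} such that x has cycle type {3, 3, 3} (the disjoint product of three 3-cycles), y is a 5-cycle (cycle type {5}), and the product x·y has cycle type {8, 2}. -/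
open Equiv Equiv.Perm

theorem List.cycleType_prod_map_formPerm {α : Type*} [DecidableEq α] [Fintype α]
    {p : List (List α)} (hp : p.flatten.Nodup) (hlen : ∀ l ∈ p, 2 ≤ l.length) :
    (p.map List.formPerm).prod.cycleType = (p.map List.length : Multiset ℕ) := by
  obtain ⟨hnodup, hdisj⟩ := List.nodup_flatten.1 hp
  rw [cycleType_eq _ rfl]
  · rw [List.map_map]
    congr 1
    refine List.map_congr_left fun l hl => ?_
    rw [Function.comp_apply, Function.comp_apply,
      List.support_formPerm_of_nodup l (hnodup l hl) (by rintro x rfl; simpa using hlen _ hl),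
      List.toFinset_card_of_nodup (hnodup l hl)]
  · simpa using fun l hl => List.isCycle_formPerm (hnodup l hl) (hlen l hl)
  · rw [List.pairwise_map]
    refine hdisj.imp_of_mem fun ha hb hab => ?_
    rwa [List.formPerm_disjoint_iff (hnodup _ ha) (hnodup _ hb) (hlen _ ha) (hlen _ hb)]

/-- There exist `x, y ∈ S_10` with `x` of cycle type `{3, 3, 3}`, `y` a
`5`-cycle, and `x * y` of cycle type `{8, 2}`. -/
theorem exceptional_3_5_8 :
    ∃ x y : Equiv.Perm (Fin 10),
      x.cycleType = ({3, 3, 3} : Multiset ℕ) ∧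
      y.cycleType = ({5} : Multiset ℕ) ∧
      (x * y).cycleType = ({8, 2} : Multiset ℕ) := by
  -- x = (1,2,3)(4,5,6)(7,8,9) and y = (1,4,8,9,10), with the points of `Fin 10` numbered from 0
  let x : Perm (Fin 10) := ([[0, 1, 2], [3, 4, 5], [6, 7, 8]].map List.formPerm).prod
  let y : Perm (Fin 10) := ([[0, 3, 7, 8, 9]].map List.formPerm).prod
  have hxy : x * y = ([[0, 4, 5, 3, 8, 9, 1, 2], [6, 7]].map List.formPerm).prod := by decide
  refine ⟨x, y, ?_, ?_, hxy ▸ ?_⟩ <;>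
    exact List.cycleType_prod_map_formPerm (by decide) (by decide)
end

section
/- Let k ≥ 2 be an integer and let n be a natural number with n ≤ 2^k + 1. Then there do not exist permutations x, y, z in the symmetric group S_n such that x and y both have order 2^k − 1, z has order 2^k, and x·y·z = 1. In particular, for the order triple (a, b, c) = (2^k − 1, 2^k − 1, 2^k), the permutation degree c + 2 in the main theorem cannot be improved. -/
/-!
Elements of odd order are even permutations, so `x` and `y`, hence also `z = (x * y)⁻¹`, are even.
But every cycle length of `z` is a power of two with least common multiple `2 ^ k`, so `z` has a
cycle of length `2 ^ k`; on at most `2 ^ k + 1` points no other nontrivial cycle fits, so `z` is a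
single cycle of even length, an odd permutation.
-/

theorem Int.units_eq_one_of_pow_eq_one {u : ℤˣ} {n : ℕ} (hn : Odd n) (h : u ^ n = 1) : u = 1 := by
  rwa [Int.units_pow_eq_pow_mod_two, Nat.odd_iff.mp hn, pow_one] at h

theorem Multiset.prime_pow_mem_of_lcm_eq {p k : ℕ} (hp : p.Prime) (hk : k ≠ 0) {s : Multiset ℕ}
    (hs : s.lcm = p ^ k) : p ^ k ∈ s := by
  by_contra hmem
  have hdvd : s.lcm ∣ p ^ (k - 1) := by
    refine Multiset.lcm_dvd.mpr fun a ha => ?_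
    obtain ⟨j, hj, rfl⟩ := (Nat.dvd_prime_pow hp).mp (hs ▸ Multiset.dvd_lcm ha)
    have hjk : j ≠ k := by rintro rfl; exact hmem ha
    exact pow_dvd_pow p (by omega)
  rw [hs, Nat.pow_dvd_pow_iff_le_right hp.one_lt] at hdvd
  omega

namespace Equiv.Perm

variable {α : Type*} [Fintype α] [DecidableEq α]

theorem sign_eq_one_of_odd_orderOf {σ : Perm α} (h : Odd (orderOf σ)) : sign σ = 1 :=
  Int.units_eq_one_of_pow_eq_one h (by rw [← map_pow, pow_orderOf_eq_one, map_one])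

theorem prime_pow_mem_cycleType {σ : Perm α} {p k : ℕ} (hp : p.Prime) (hk : k ≠ 0)
    (h : orderOf σ = p ^ k) : p ^ k ∈ σ.cycleType :=
  Multiset.prime_pow_mem_of_lcm_eq hp hk (by rw [lcm_cycleType, h])

theorem sign_eq_neg_one_of_orderOf_eq_two_pow {σ : Perm α} {k : ℕ} (hk : k ≠ 0)
    (hcard : Fintype.card α ≤ 2 ^ k + 1) (h : orderOf σ = 2 ^ k) : sign σ = -1 := by
  have hσ : σ.cycleType = {2 ^ k} :=
    cycleType_of_card_le_mem_cycleType_add_two (by omega)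
      (prime_pow_mem_cycleType Nat.prime_two hk h)
  have heven : Even (2 ^ k) := (Nat.even_pow' hk).mpr even_two
  rw [sign_of_cycleType, hσ, Multiset.sum_singleton, Multiset.card_singleton,
    heven.add_one.neg_one_pow]

end Equiv.Perm

/-- Sharpness of the degree bound: for `k ≥ 2` and `n ≤ 2^k + 1`, there are no
`x, y, z ∈ S_n` of orders `2^k - 1`, `2^k - 1`, `2^k` with `x * y * z = 1`. -/
theorem degree_bound_sharp (k n : ℕ) (hk : 2 ≤ k) (hn : n ≤ 2 ^ k + 1) :
    ¬ ∃ x y z : Equiv.Perm (Fin n),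
      orderOf x = 2 ^ k - 1 ∧ orderOf y = 2 ^ k - 1 ∧ orderOf z = 2 ^ k ∧
      x * y * z = 1 := by
  rintro ⟨x, y, z, hx, hy, hz, hxyz⟩
  have hodd : Odd (2 ^ k - 1) :=
    Nat.Even.sub_odd Nat.one_le_two_pow ((Nat.even_pow' (by omega)).mpr even_two) odd_one
  have hz_even : Equiv.Perm.sign z = 1 := by
    simpa [Equiv.Perm.sign_eq_one_of_odd_orderOf, hx, hy, hodd] using
      congrArg Equiv.Perm.sign hxyz
  have hz_odd : Equiv.Perm.sign z = -1 :=
    Equiv.Perm.sign_eq_neg_one_of_orderOf_eq_two_pow (by omega) (by simpa using hn) hz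
  exact absurd (hz_even.symm.trans hz_odd) (by decide)
end
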